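/- arXiv:math/0702131 — 2 statements merged into one kernel-verified Lean document; each statement's English description precedes it below -/
import Mathlib

section
/- Let K ≥ 0 and suppose b and σ satisfy the linear growth condition |b(t,x,u,v)| + |σ(t,x,u,v)| ≤ C₀(1+|x|) for some C₀ > 0 and all (t,x,u,v). Then for any Ã > 0 there exists C₁ > 0 such that the function χ(t,x) = exp[(C₁(T−t)+Ã)ψ(x)], with ψ(x) = [log((|x|²+1)^{1/2}) + 1]², satisfies the strict differential inequality ∂_tχ(t,x) + sup_{u∈U, v∈V} { (1/2)·tr(σσᵀ(t,x,u,v)·D²χ(t,x)) + Dχ(t,x)·b(t,x,u,v) + Kχ(t,x) + K|Dχ(t,x)·σ(t,x,u,v)| } < 0 for all (t,x) ∈ [t₁,T]×ℝⁿ, where t₁ = max(T − Ã/C₁, 0) and D, D² denote the gradient and Hessian in the x-variable. -/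
noncomputable section

open scoped RealInnerProductSpace Matrix

attribute [local instance] Matrix.frobeniusNormedAddCommGroup

/-- The Euclidean state space `ℝⁿ`. -/
abbrev Eucl (n : ℕ) := EuclideanSpace ℝ (Fin n)

/-- Time derivative `∂φ/∂t (t,x)` of a function `φ : ℝ × ℝⁿ → ℝ`. -/
def timeDeriv {n : ℕ} (φ : ℝ → Eucl n → ℝ) (t : ℝ) (x : Eucl n) : ℝ :=
  deriv (fun s => φ s x) t

/-- Spatial gradient `Dφ(t,x) ∈ ℝⁿ`. -/
def spaceGrad {n : ℕ} (φ : ℝ → Eucl n → ℝ) (t : ℝ) (x : Eucl n) : Eucl n :=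
  gradient (fun y => φ t y) x

/-- Spatial Hessian `D²φ(t,x)` as an `n × n` matrix. -/
def spaceHess {n : ℕ} (φ : ℝ → Eucl n → ℝ) (t : ℝ) (x : Eucl n) :
    Matrix (Fin n) (Fin n) ℝ :=
  Matrix.of fun i j =>
    fderiv ℝ (fun y => fderiv ℝ (fun y' => φ t y') y (EuclideanSpace.single j (1 : ℝ))) x
      (EuclideanSpace.single i (1 : ℝ))

/-- The row vector `pᵀσ ∈ ℝᵈ`. -/
def rowMul {n d : ℕ} (p : Eucl n) (M : Matrix (Fin n) (Fin d) ℝ) : Eucl d :=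
  (WithLp.equiv 2 (Fin d → ℝ)).symm fun j => ∑ i, p i * M i j

/-- `φ ∈ C³_{l,b}([0,T]×ℝⁿ)`: three times continuously differentiable with all
derivatives of order 1 to 3 bounded. -/
def IsTestFunction {n : ℕ} (φ : ℝ → Eucl n → ℝ) : Prop :=
  ContDiff ℝ 3 (fun p : ℝ × Eucl n => φ p.1 p.2) ∧
  ∀ i : ℕ, 1 ≤ i → i ≤ 3 →
    ∃ M : ℝ, ∀ p : ℝ × Eucl n,
      ‖iteratedFDeriv ℝ i (fun q : ℝ × Eucl n => φ q.1 q.2) p‖ ≤ M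

/-- Viscosity subsolution of `∂_t w + G(t,x,w,Dw,D²w) = 0` on `[0,T)×ℝⁿ`
with terminal condition `w(T,·) = g`. -/
def IsViscositySubsolution {n : ℕ} (T : ℝ)
    (G : ℝ → Eucl n → ℝ → Eucl n → Matrix (Fin n) (Fin n) ℝ → ℝ)
    (g : Eucl n → ℝ) (w : ℝ → Eucl n → ℝ) : Prop :=
  (∀ x : Eucl n, w T x ≤ g x) ∧
  ∀ φ : ℝ → Eucl n → ℝ, IsTestFunction φ →
    ∀ t ∈ Set.Ico (0 : ℝ) T, ∀ x : Eucl n,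
      IsLocalMaxOn (fun p : ℝ × Eucl n => w p.1 p.2 - φ p.1 p.2)
        (Set.Icc (0 : ℝ) T ×ˢ (Set.univ : Set (Eucl n))) (t, x) →
      0 ≤ timeDeriv φ t x + G t x (φ t x) (spaceGrad φ t x) (spaceHess φ t x)

/-- Viscosity supersolution of `∂_t w + G(t,x,w,Dw,D²w) = 0` on `[0,T)×ℝⁿ`
with terminal condition `w(T,·) = g`. -/
def IsViscositySupersolution {n : ℕ} (T : ℝ)
    (G : ℝ → Eucl n → ℝ → Eucl n → Matrix (Fin n) (Fin n) ℝ → ℝ)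
    (g : Eucl n → ℝ) (w : ℝ → Eucl n → ℝ) : Prop :=
  (∀ x : Eucl n, g x ≤ w T x) ∧
  ∀ φ : ℝ → Eucl n → ℝ, IsTestFunction φ →
    ∀ t ∈ Set.Ico (0 : ℝ) T, ∀ x : Eucl n,
      IsLocalMinOn (fun p : ℝ × Eucl n => w p.1 p.2 - φ p.1 p.2)
        (Set.Icc (0 : ℝ) T ×ˢ (Set.univ : Set (Eucl n))) (t, x) →
      timeDeriv φ t x + G t x (φ t x) (spaceGrad φ t x) (spaceHess φ t x) ≤ 0

/-- Viscosity solution: both a sub- and a supersolution. -/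
def IsViscositySolution {n : ℕ} (T : ℝ)
    (G : ℝ → Eucl n → ℝ → Eucl n → Matrix (Fin n) (Fin n) ℝ → ℝ)
    (g : Eucl n → ℝ) (w : ℝ → Eucl n → ℝ) : Prop :=
  IsViscositySubsolution T G g w ∧ IsViscositySupersolution T G g w

/-- The lower Hamiltonian `H⁻`. -/
def lowerHamiltonian {n d : ℕ} {U V : Type*}
    (b : ℝ → Eucl n → U → V → Eucl n)
    (σ : ℝ → Eucl n → U → V → Matrix (Fin n) (Fin d) ℝ)
    (f : ℝ → Eucl n → ℝ → Eucl d → U → V → ℝ)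
    (t : ℝ) (x : Eucl n) (y : ℝ) (p : Eucl n) (X : Matrix (Fin n) (Fin n) ℝ) : ℝ :=
  ⨆ u : U, ⨅ v : V,
    (1 / 2) * Matrix.trace (σ t x u v * (σ t x u v)ᵀ * X)
      + ⟪p, b t x u v⟫
      + f t x y (rowMul p (σ t x u v)) u v

/-- The upper Hamiltonian `H⁺`. -/
def upperHamiltonian {n d : ℕ} {U V : Type*}
    (b : ℝ → Eucl n → U → V → Eucl n)
    (σ : ℝ → Eucl n → U → V → Matrix (Fin n) (Fin d) ℝ)
    (f : ℝ → Eucl n → ℝ → Eucl d → U → V → ℝ)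
    (t : ℝ) (x : Eucl n) (y : ℝ) (p : Eucl n) (X : Matrix (Fin n) (Fin n) ℝ) : ℝ :=
  ⨅ v : V, ⨆ u : U,
    (1 / 2) * Matrix.trace (σ t x u v * (σ t x u v)ᵀ * X)
      + ⟪p, b t x u v⟫
      + f t x y (rowMul p (σ t x u v)) u v

/-- Membership in the class `Θ` of continuous functions on `[0,T]×ℝⁿ` satisfying the
growth condition `φ(t,x)·exp{−Ã[log((|x|²+1)^{1/2})]²} → 0` as `|x| → ∞`,
uniformly in `t ∈ [0,T]`. -/
def MemTheta {n : ℕ} (T : ℝ) (φ : ℝ → Eucl n → ℝ) : Prop :=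
  ContinuousOn (fun p : ℝ × Eucl n => φ p.1 p.2)
      (Set.Icc (0 : ℝ) T ×ˢ (Set.univ : Set (Eucl n))) ∧
  ∃ A : ℝ, 0 < A ∧ ∀ ε > (0 : ℝ), ∃ R : ℝ, ∀ t ∈ Set.Icc (0 : ℝ) T, ∀ x : Eucl n,
    R ≤ ‖x‖ →
      |φ t x| * Real.exp (-A * (Real.log ((‖x‖ ^ 2 + 1) ^ ((1 : ℝ) / 2))) ^ 2) ≤ ε

/-- `ψ(x) = [log((|x|²+1)^{1/2}) + 1]²`. -/
def psiFun {n : ℕ} (x : Eucl n) : ℝ :=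
  (Real.log ((‖x‖ ^ 2 + 1) ^ ((1 : ℝ) / 2)) + 1) ^ 2

/-- `χ(t,x) = exp[(C₁(T−t)+Ã)ψ(x)]`. -/
def chiFun {n : ℕ} (T C₁ A : ℝ) (t : ℝ) (x : Eucl n) : ℝ :=
  Real.exp ((C₁ * (T - t) + A) * psiFun x)

section AuxChi
variable {n d : ℕ}


def Lf (s : ℝ) : ℝ := (1/2) * Real.log (s+1) + 1
def Hf (c s : ℝ) : ℝ := Real.exp (c * (Lf s)^2)
def H1 (c s : ℝ) : ℝ := Hf c s * (c * Lf s / (s+1))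
def H2 (c s : ℝ) : ℝ := Hf c s * (c * (c * (Lf s)^2 + 1/2 - Lf s) / (s+1)^2)

lemma hasDerivAt_Lf {s : ℝ} (hs : 0 ≤ s) : HasDerivAt Lf (1/(2*(s+1))) s := by
  have h1 : (0:ℝ) < s + 1 := by linarith
  have := (((hasDerivAt_id s).add_const 1).log (ne_of_gt h1)).const_mul (1/2 : ℝ)
  have h3 : HasDerivAt (fun x : ℝ => (1/2) * Real.log (x+1) + 1) ((1/2) * (1/(s+1))) s := by
    simpa using this.add_const 1
  convert h3 using 1
  · rfl
  field_simp

lemma hasDerivAt_Hf (c : ℝ) {s : ℝ} (hs : 0 ≤ s) : HasDerivAt (Hf c) (H1 c s) s := by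
  have h1 : (0:ℝ) < s + 1 := by linarith
  have hL := hasDerivAt_Lf hs
  have h2 := (((hL.pow 2).const_mul c)).exp
  have : HasDerivAt (Hf c) (Real.exp (c * Lf s ^ 2) * (c * (↑2 * Lf s ^ (2-1) * (1/(2*(s+1)))))) s := h2
  convert this using 1
  simp only [H1, Hf]
  field_simp
  ring

lemma hasDerivAt_H1 (c : ℝ) {s : ℝ} (hs : 0 ≤ s) : HasDerivAt (H1 c) (H2 c s) s := by
  have h1 : (0:ℝ) < s + 1 := by linarith
  have hL := hasDerivAt_Lf hs
  have hH := hasDerivAt_Hf c hs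
  have hnum : HasDerivAt (fun x => c * Lf x) (c * (1/(2*(s+1)))) s := hL.const_mul c
  have hden : HasDerivAt (fun x : ℝ => x + 1) 1 s := (hasDerivAt_id s).add_const 1
  have hq : HasDerivAt (fun x => c * Lf x / (x+1))
      ((c * (1/(2*(s+1))) * (s+1) - c * Lf s * 1) / (s+1)^2) s := hnum.div hden (ne_of_gt h1)
  have := hH.mul hq
  have he : HasDerivAt (H1 c)
      (H1 c s * (c * Lf s / (s+1)) + Hf c s * ((c * (1/(2*(s+1))) * (s+1) - c * Lf s * 1) / (s+1)^2)) s := this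
  convert he using 1
  simp only [H1, H2, Hf]
  field_simp
  ring



lemma hasFDeriv_nsq (x : Eucl n) : HasFDerivAt (fun y : Eucl n => ‖y‖^2) (2 • (innerSL ℝ x)) x := by
  simpa using (hasFDerivAt_id x).norm_sq

lemma hasFDerivAt_chi (c : ℝ) (x : Eucl n) :
    HasFDerivAt (fun y : Eucl n => Hf c (‖y‖^2))
      (H1 c (‖x‖^2) • (2 • (innerSL ℝ x))) x :=
  by have := (hasDerivAt_Hf c (sq_nonneg ‖x‖)).comp_hasFDerivAt x (hasFDeriv_nsq x); exact this

lemma hasGradientAt_chi (c : ℝ) (x : Eucl n) :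
    HasGradientAt (fun y : Eucl n => Hf c (‖y‖^2)) ((2 * H1 c (‖x‖^2)) • x) x := by
  rw [hasGradientAt_iff_hasFDerivAt]
  refine (hasFDerivAt_chi c x).congr_fderiv ?_
  ext y
  simp [real_inner_smul_left]
  ring

lemma fderiv_chi_apply (c : ℝ) (y : Eucl n) (j : Fin n) :
    fderiv ℝ (fun y' : Eucl n => Hf c (‖y'‖^2)) y (EuclideanSpace.single j (1:ℝ))
      = 2 * H1 c (‖y‖^2) * y j := by
  rw [(hasFDerivAt_chi c y).fderiv]
  simp [EuclideanSpace.inner_single_right]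
  ring

lemma hasFDerivAt_H1comp (c : ℝ) (x : Eucl n) :
    HasFDerivAt (fun y : Eucl n => H1 c (‖y‖^2))
      (H2 c (‖x‖^2) • (2 • (innerSL ℝ x))) x :=
  by have := (hasDerivAt_H1 c (sq_nonneg ‖x‖)).comp_hasFDerivAt x (hasFDeriv_nsq x); exact this

lemma hess_chi (c : ℝ) (x : Eucl n) (i j : Fin n) :
    fderiv ℝ (fun y => fderiv ℝ (fun y' : Eucl n => Hf c (‖y'‖^2)) y
        (EuclideanSpace.single j (1:ℝ))) x (EuclideanSpace.single i (1:ℝ))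
      = 4 * H2 c (‖x‖^2) * x i * x j + (if i = j then 2 * H1 c (‖x‖^2) else 0) := by
  have hfun : (fun y => fderiv ℝ (fun y' : Eucl n => Hf c (‖y'‖^2)) y
      (EuclideanSpace.single j (1:ℝ))) = fun y : Eucl n => 2 * (H1 c (‖y‖^2) * y j) := by
    funext y
    rw [fderiv_chi_apply]
    ring
  rw [hfun]
  have hj : HasFDerivAt (fun y : Eucl n => y j) (EuclideanSpace.proj j : Eucl n →L[ℝ] ℝ) x :=
    (EuclideanSpace.proj j : Eucl n →L[ℝ] ℝ).hasFDerivAt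
  have hp : HasFDerivAt (fun y : Eucl n => 2 * (H1 c (‖y‖^2) * y j)) _ x :=
    ((hasFDerivAt_H1comp c x).mul' hj).const_mul (2:ℝ)
  rw [hp.fderiv]
  simp [EuclideanSpace.inner_single_right, EuclideanSpace.single_apply]
  by_cases h : i = j
  · simp [h]; ring
  · simp [h, Ne.symm h]; ring


lemma trace_formula (M : Matrix (Fin n) (Fin d) ℝ) (x : Fin n → ℝ) (a e : ℝ) :
    Matrix.trace (M * Mᵀ * (Matrix.of fun i j : Fin n => a * x i * x j + if i = j then e else 0))
      = a * (∑ j, (∑ i, x i * M i j)^2) + e * (∑ i, ∑ j, (M i j)^2) := by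
  classical
  simp only [Matrix.trace, Matrix.diag, Matrix.mul_apply, Matrix.of_apply,
    Matrix.transpose_apply]
  have step : ∀ i : Fin n,
      ∑ k, (∑ j, M i j * M k j) * (a * x k * x i + if k = i then e else 0)
        = (∑ k, ∑ j, M i j * M k j * (a * x k * x i)) + (∑ j, M i j * M i j) * e := by
    intro i
    have h1 : ∀ k, (∑ j, M i j * M k j) * (a * x k * x i + if k = i then e else 0)
        = (∑ j, M i j * M k j * (a * x k * x i)) + (if k = i then (∑ j, M i j * M k j) * e else 0) := by
      intro k
      rw [mul_add, Finset.sum_mul, mul_ite, mul_zero]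
    simp only [h1]
    rw [Finset.sum_add_distrib, Finset.sum_ite_eq' Finset.univ i
      (fun k => (∑ j, M i j * M k j) * e)]
    simp
  simp only [step]
  rw [Finset.sum_add_distrib]
  congr 1
  · have h2 : ∀ i : Fin n, ∑ k, ∑ j, M i j * M k j * (a * x k * x i)
        = ∑ j, ∑ k, M i j * M k j * (a * x k * x i) := fun i => Finset.sum_comm
    simp only [h2]
    rw [Finset.sum_comm, Finset.mul_sum]
    refine Finset.sum_congr rfl fun j _ => ?_
    rw [sq, Finset.sum_mul_sum, Finset.mul_sum]
    refine Finset.sum_congr rfl fun i _ => ?_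
    rw [Finset.mul_sum]
    refine Finset.sum_congr rfl fun k _ => ?_
    ring
  · rw [Finset.mul_sum]
    refine Finset.sum_congr rfl fun i _ => ?_
    rw [Finset.sum_mul, Finset.mul_sum]
    refine Finset.sum_congr rfl fun j _ => ?_
    ring

lemma normsq_eq (x : EuclideanSpace ℝ (Fin n)) : ‖x‖^2 = ∑ i, (x i)^2 := by
  rw [PiLp.norm_sq_eq_of_L2]
  simp [sq_abs]

lemma frob_sq (M : Matrix (Fin n) (Fin d) ℝ) : ‖M‖^2 = ∑ i, ∑ j, (M i j)^2 := by
  have h := Matrix.frobenius_norm_def M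
  have hX : (0:ℝ) ≤ ∑ i, ∑ j, ‖M i j‖ ^ (2:ℝ) := by
    positivity
  rw [h, ← Real.rpow_natCast (_ ^ ((1:ℝ)/2)) 2, ← Real.rpow_mul hX]
  norm_num



lemma Lf_ge_one {s : ℝ} (hs : 0 ≤ s) : 1 ≤ Lf s := by
  have h := Real.log_nonneg (by linarith : (1:ℝ) ≤ s + 1)
  unfold Lf; linarith

lemma Hf_pos (c s : ℝ) : 0 < Hf c s := Real.exp_pos _

lemma H1_nonneg {c s : ℝ} (hc : 0 ≤ c) (hs : 0 ≤ s) : 0 ≤ H1 c s := by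
  have hL : (1:ℝ) ≤ Lf s := Lf_ge_one hs
  exact mul_nonneg (Hf_pos c s).le
    (div_nonneg (mul_nonneg hc (by linarith)) (by linarith))

lemma H1_mul_D {A c s : ℝ} (hc : c ≤ 2*A) (hs : 0 ≤ s) :
    H1 c s * (s+1) ≤ 2*A*Lf s * Hf c s := by
  have hD : (0:ℝ) < s+1 := by linarith
  have hL : (1:ℝ) ≤ Lf s := Lf_ge_one hs
  have hE : (0:ℝ) < Hf c s := Hf_pos c s
  have key : H1 c s * (s+1) = Hf c s * (c * Lf s) := by
    unfold H1; field_simp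
  rw [key]
  nlinarith [mul_le_mul_of_nonneg_right hc (by linarith : (0:ℝ) ≤ Lf s)]

lemma H2_abs_mul {A c s : ℝ} (hA : 0 < A) (hc1 : A ≤ c) (hc2 : c ≤ 2*A) (hs : 0 ≤ s) :
    |H2 c s| * (s+1)^2 ≤ 2*A*(2*A+1)*(Lf s)^2 * Hf c s := by
  have hD : (0:ℝ) < s+1 := by linarith
  have hD2 : (0:ℝ) < (s+1)^2 := by positivity
  have hL : (1:ℝ) ≤ Lf s := Lf_ge_one hs
  have hE : (0:ℝ) < Hf c s := Hf_pos c s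
  have hc0 : 0 < c := lt_of_lt_of_le hA hc1
  have key : H2 c s * (s+1)^2 = Hf c s * (c * (c * (Lf s)^2 + 1/2 - Lf s)) := by
    unfold H2; field_simp
  have habs : |H2 c s| * (s+1)^2 = Hf c s * (c * |c * (Lf s)^2 + 1/2 - Lf s|) := by
    rw [← abs_of_pos hD2, ← abs_mul, key, abs_mul, abs_mul,
      abs_of_pos hE, abs_of_pos hc0]
  rw [habs]
  have hz : |c * (Lf s)^2 + 1/2 - Lf s| ≤ (2*A+1) * (Lf s)^2 := by
    rw [abs_le]
    constructor
    · nlinarith [sq_nonneg (Lf s), mul_le_mul_of_nonneg_right hc1 (sq_nonneg (Lf s))]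
    · nlinarith [mul_le_mul_of_nonneg_right hc2 (sq_nonneg (Lf s))]
  calc Hf c s * (c * |c * (Lf s)^2 + 1/2 - Lf s|)
      ≤ Hf c s * (c * ((2*A+1) * (Lf s)^2)) := by
        apply mul_le_mul_of_nonneg_left _ hE.le
        exact mul_le_mul_of_nonneg_left hz hc0.le
    _ ≤ 2*A*(2*A+1)*(Lf s)^2 * Hf c s := by
        nlinarith [mul_le_mul_of_nonneg_right hc2
          (mul_nonneg (by positivity : (0:ℝ) ≤ (2*A+1)*(Lf s)^2) hE.le)]

set_option maxHeartbeats 1000000 in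
lemma term_bound (A C₀ K r Q trS ip rq s L E h1 h2 : ℝ)
    (hA : 0 < A) (hC₀ : 0 < C₀) (hK : 0 ≤ K) (hr : 0 ≤ r) (hs : s = r^2)
    (hL : 1 ≤ L) (hE : 0 < E) (h1n : 0 ≤ h1)
    (h1b : h1*(s+1) ≤ 2*A*L*E) (h2b : |h2| *(s+1)^2 ≤ 2*A*(2*A+1)*L^2*E)
    (hQ0 : 0 ≤ Q) (hQ : Q ≤ r^2*(C₀*(1+r))^2)
    (htr0 : 0 ≤ trS) (htr : trS ≤ (C₀*(1+r))^2)
    (hip : ip ≤ r*(C₀*(1+r))) (hrq0 : 0 ≤ rq) (hrq : rq ≤ r*(C₀*(1+r))) :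
    2*h2*Q + h1*trS + 2*h1*ip + K*E + K*(2*h1*rq)
      ≤ (8*A*(2*A+1)*C₀^2 + 4*A*C₀^2 + 6*A*C₀*(1+K) + K) * (L^2*E) := by
  subst hs
  have hsq : 0 ≤ r^2 := sq_nonneg r
  have hD : (0:ℝ) < r^2+1 := by linarith
  have geo : r ≤ (r^2+1)/2 := by nlinarith [sq_nonneg (r-1)]
  have g1 : (1+r)^2 ≤ 2*(r^2+1) := by nlinarith
  have g2 : r*(1+r) ≤ (3/2)*(r^2+1) := by nlinarith
  have g3 : r^2*(1+r)^2 ≤ 2*(r^2+1)^2 := by nlinarith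
  have hLE : L*E ≤ L^2*E := by nlinarith [mul_nonneg (mul_nonneg (by linarith : (0:ℝ) ≤ L-1) (by linarith : (0:ℝ) ≤ L)) hE.le]
  have B1 : 2*h2*Q ≤ 8*A*(2*A+1)*C₀^2 * (L^2*E) := by
    have e1 : h2 * Q ≤ |h2| * Q := mul_le_mul_of_nonneg_right (le_abs_self _) hQ0
    have e2 : Q ≤ 2*C₀^2*(r^2+1)^2 := by linarith [mul_le_mul_of_nonneg_left g3 (sq_nonneg C₀)]
    have e3 : |h2| * Q ≤ |h2| * (2*C₀^2*(r^2+1)^2) :=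
      mul_le_mul_of_nonneg_left e2 (abs_nonneg _)
    have e5 : 2*C₀^2 * (|h2| * (r^2+1)^2) ≤ 2*C₀^2 * (2*A*(2*A+1)*L^2*E) :=
      mul_le_mul_of_nonneg_left h2b (by positivity)
    linarith
  have B2 : h1*trS ≤ 4*A*C₀^2 * (L^2*E) := by
    have e2 : trS ≤ 2*C₀^2*(r^2+1) := by linarith [mul_le_mul_of_nonneg_left g1 (sq_nonneg C₀)]
    have e3 : h1 * trS ≤ h1 * (2*C₀^2*(r^2+1)) := mul_le_mul_of_nonneg_left e2 h1n
    have e5 : 2*C₀^2 * (h1 * (r^2+1)) ≤ 2*C₀^2 * (2*A*L*E) :=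
      mul_le_mul_of_nonneg_left h1b (by positivity)
    have e6 : 4*A*C₀^2 * (L*E) ≤ 4*A*C₀^2 * (L^2*E) :=
      mul_le_mul_of_nonneg_left hLE (by positivity)
    linarith
  have B3h : ∀ z : ℝ, z ≤ r*(C₀*(1+r)) → 2*h1*z ≤ 6*A*C₀ * (L^2*E) := by
    intro z hz
    have e2 : z ≤ (3/2)*C₀*(r^2+1) := by
      linarith [mul_le_mul_of_nonneg_left g2 hC₀.le]
    have e3 : 2*h1*z ≤ 2*h1*((3/2)*C₀*(r^2+1)) :=
      mul_le_mul_of_nonneg_left e2 (by linarith)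
    have e5 : 3*C₀*(h1 * (r^2+1)) ≤ 3*C₀*(2*A*L*E) :=
      mul_le_mul_of_nonneg_left h1b (by positivity)
    have e6 : 6*A*C₀ * (L*E) ≤ 6*A*C₀ * (L^2*E) :=
      mul_le_mul_of_nonneg_left hLE (by positivity)
    linarith
  have B3 := B3h ip hip
  have B5 : K*(2*h1*rq) ≤ K*(6*A*C₀ * (L^2*E)) :=
    mul_le_mul_of_nonneg_left (B3h rq hrq) hK
  have B4 : K*E ≤ K*(L^2*E) := by
    apply mul_le_mul_of_nonneg_left _ hK
    nlinarith [mul_nonneg (mul_nonneg (by linarith : (0:ℝ) ≤ L-1) (by linarith : (0:ℝ) ≤ L+1)) hE.le]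
  linarith

end AuxChi

section MainAux
variable {n d : ℕ}

lemma rowMul_smul (a : ℝ) (p : Eucl n) (M : Matrix (Fin n) (Fin d) ℝ) :
    rowMul (a • p) M = a • rowMul p M := by
  unfold rowMul
  ext j
  simp [Finset.mul_sum, PiLp.smul_apply, smul_eq_mul]
  exact Finset.sum_congr rfl fun i _ => by ring

lemma norm_rowMul_sq (p : Eucl n) (M : Matrix (Fin n) (Fin d) ℝ) :
    ‖rowMul p M‖^2 = ∑ j, (∑ i, p i * M i j)^2 := by
  rw [normsq_eq]
  unfold rowMul
  exact Finset.sum_congr rfl fun j _ => by rfl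

lemma Q_le_CS (p : Eucl n) (M : Matrix (Fin n) (Fin d) ℝ) :
    (∑ j, (∑ i, p i * M i j)^2) ≤ (∑ i, (p i)^2) * (∑ i, ∑ j, (M i j)^2) := by
  calc (∑ j, (∑ i, p i * M i j)^2)
      ≤ ∑ j, (∑ i, (p i)^2) * (∑ i, (M i j)^2) :=
        Finset.sum_le_sum fun j _ => Finset.sum_mul_sq_le_sq_mul_sq _ _ _
    _ = (∑ i, (p i)^2) * (∑ j, ∑ i, (M i j)^2) := by rw [Finset.mul_sum]
    _ = (∑ i, (p i)^2) * (∑ i, ∑ j, (M i j)^2) := by rw [Finset.sum_comm]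

lemma psi_eq (y : Eucl n) : psiFun y = (Lf (‖y‖^2))^2 := by
  unfold psiFun Lf
  rw [Real.log_rpow (by positivity : (0:ℝ) < ‖y‖^2 + 1)]

lemma chi_eq (T C₁ A t : ℝ) (y : Eucl n) :
    chiFun T C₁ A t y = Hf (C₁*(T-t)+A) (‖y‖^2) := by
  unfold chiFun Hf
  rw [psi_eq]

end MainAux

/-- **Lemma 6.2.** For any `Ã > 0` there is `C₁ > 0` such that
`χ(t,x) = exp[(C₁(T−t)+Ã)ψ(x)]` is a strict classical supersolution of the comparison
equation on `[t₁,T]×ℝⁿ`, where `t₁ = max(T − Ã/C₁, 0)`. -/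
theorem chi_strict_supersolution
    {n d : ℕ} (hn : 1 ≤ n) (hd : 1 ≤ d) {T : ℝ} (hT : 0 < T)
    {U V : Type*} [MetricSpace U] [CompactSpace U] [Nonempty U]
    [MetricSpace V] [CompactSpace V] [Nonempty V]
    (b : ℝ → Eucl n → U → V → Eucl n)
    (σ : ℝ → Eucl n → U → V → Matrix (Fin n) (Fin d) ℝ)
    (K : ℝ) (hK : 0 ≤ K)
    -- linear growth of `b` and `σ`
    (hgrowth : ∃ C₀ > (0 : ℝ), ∀ t ∈ Set.Icc (0 : ℝ) T, ∀ (x : Eucl n) (u : U) (v : V),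
      ‖b t x u v‖ + ‖σ t x u v‖ ≤ C₀ * (1 + ‖x‖)) :
    ∀ A > (0 : ℝ), ∃ C₁ > (0 : ℝ),
      ∀ t ∈ Set.Icc (max (T - A / C₁) 0) T, ∀ x : Eucl n,
        timeDeriv (chiFun T C₁ A) t x +
          (⨆ u : U, ⨆ v : V,
            (1 / 2) * Matrix.trace
                (σ t x u v * (σ t x u v)ᵀ * spaceHess (chiFun T C₁ A) t x)
              + ⟪spaceGrad (chiFun T C₁ A) t x, b t x u v⟫
              + K * chiFun T C₁ A t x
              + K * ‖rowMul (spaceGrad (chiFun T C₁ A) t x) (σ t x u v)‖) < 0 := by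
  obtain ⟨C₀, hC₀, hbound⟩ := hgrowth
  intro A hA
  set M : ℝ := 8*A*(2*A+1)*C₀^2 + 4*A*C₀^2 + 6*A*C₀*(1+K) + K with hM
  have hM0 : 0 ≤ M := by
    have m1 : 0 ≤ 8*A*(2*A+1)*C₀^2 :=
      mul_nonneg (mul_nonneg (by linarith) (by linarith)) (sq_nonneg C₀)
    have m2 : 0 ≤ 4*A*C₀^2 := mul_nonneg (by linarith) (sq_nonneg C₀)
    have m3 : 0 ≤ 6*A*C₀*(1+K) :=
      mul_nonneg (mul_nonneg (by linarith) hC₀.le) (by linarith)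
    linarith
  have hC₁ : (0:ℝ) < M + 1 := by linarith
  refine ⟨M+1, hC₁, ?_⟩
  intro t ht x
  have ht0 : 0 ≤ t := le_trans (le_max_right _ _) ht.1
  have htT : t ≤ T := ht.2
  have ht1 : T - A/(M+1) ≤ t := le_trans (le_max_left _ _) ht.1
  set c : ℝ := (M+1)*(T-t)+A with hc
  have hc1 : A ≤ c := by
    have : 0 ≤ (M+1)*(T-t) := mul_nonneg hC₁.le (by linarith)
    linarith
  have hc2 : c ≤ 2*A := by
    have h : T - t ≤ A/(M+1) := by linarith
    have h2 := mul_le_mul_of_nonneg_left h hC₁.le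
    rw [mul_div_cancel₀ _ (ne_of_gt hC₁)] at h2
    linarith
  set r : ℝ := ‖x‖ with hr
  have hr0 : 0 ≤ r := norm_nonneg x
  have hs0 : (0:ℝ) ≤ r^2 := sq_nonneg r
  set L : ℝ := Lf (r^2) with hLdef
  set E : ℝ := Hf c (r^2) with hEdef
  set h1 : ℝ := H1 c (r^2) with h1def
  set h2 : ℝ := H2 c (r^2) with h2def
  have hLge : 1 ≤ L := Lf_ge_one hs0
  have hEpos : 0 < E := Hf_pos c (r^2)
  have hc0 : (0:ℝ) ≤ c := by linarith
  have h1n : 0 ≤ h1 := H1_nonneg hc0 hs0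
  -- identification of the time derivative
  have htd : timeDeriv (chiFun T (M+1) A) t x = -((M+1) * psiFun x) * chiFun T (M+1) A t x := by
    unfold timeDeriv chiFun
    have hder : HasDerivAt (fun s : ℝ => ((M+1)*(T-s)+A) * psiFun x) (-(M+1)*psiFun x) t := by
      have h0 : HasDerivAt (fun s : ℝ => T - s) (-1) t := by
        simpa using (hasDerivAt_id t).const_sub T
      have hh := ((h0.const_mul (M+1)).add_const A).mul_const (psiFun x)
      refine hh.congr_deriv ?_
      ring
    rw [hder.exp.deriv]
    ring
  -- identification of the spatial function
  have hfunx : (fun y => chiFun T (M+1) A t y) = fun y : Eucl n => Hf c (‖y‖^2) := by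
    funext y
    rw [chi_eq]
  -- gradient
  have hgrad : spaceGrad (chiFun T (M+1) A) t x = (2 * h1) • x := by
    unfold spaceGrad
    rw [hfunx]
    exact (hasGradientAt_chi c x).gradient
  -- Hessian
  have hhess : spaceHess (chiFun T (M+1) A) t x
      = Matrix.of (fun i j => 4 * h2 * x i * x j + if i = j then 2 * h1 else 0) := by
    unfold spaceHess
    ext i j
    simp only [Matrix.of_apply]
    rw [show (fun y' => chiFun T (M+1) A t y') = fun y' : Eucl n => Hf c (‖y'‖^2) from hfunx]
    exact hess_chi c x i j
  have hpsix : psiFun x = L^2 := psi_eq x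
  have hchix : chiFun T (M+1) A t x = E := chi_eq T (M+1) A t x
  -- bounds from the growth hypothesis
  have key : ∀ (u : U) (v : V),
      (1 / 2) * Matrix.trace
          (σ t x u v * (σ t x u v)ᵀ * spaceHess (chiFun T (M+1) A) t x)
        + ⟪spaceGrad (chiFun T (M+1) A) t x, b t x u v⟫
        + K * chiFun T (M+1) A t x
        + K * ‖rowMul (spaceGrad (chiFun T (M+1) A) t x) (σ t x u v)‖
      ≤ M * (L^2 * E) := by
    intro u v
    have hgb := hbound t ⟨ht0, htT⟩ x u v
    have hbB : ‖b t x u v‖ ≤ C₀ * (1+r) := by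
      have := norm_nonneg (σ t x u v); linarith
    have hsB : ‖σ t x u v‖ ≤ C₀ * (1+r) := by
      have := norm_nonneg (b t x u v); linarith
    set Q : ℝ := ∑ j, (∑ i, x i * σ t x u v i j)^2 with hQdef
    set trS : ℝ := ∑ i, ∑ j, (σ t x u v i j)^2 with htrSdef
    have hQ0 : 0 ≤ Q := Finset.sum_nonneg fun j _ => sq_nonneg _
    have htrS0 : 0 ≤ trS :=
      Finset.sum_nonneg fun i _ => Finset.sum_nonneg fun j _ => sq_nonneg _
    have htrS : trS ≤ (C₀*(1+r))^2 := by
      rw [htrSdef, ← frob_sq]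
      exact pow_le_pow_left₀ (norm_nonneg _) hsB 2
    have hQ : Q ≤ r^2 * (C₀*(1+r))^2 := by
      rw [hQdef, htrSdef] at *
      calc (∑ j, (∑ i, x i * σ t x u v i j)^2)
          ≤ (∑ i, (x i)^2) * (∑ i, ∑ j, (σ t x u v i j)^2) := Q_le_CS x (σ t x u v)
        _ = r^2 * (∑ i, ∑ j, (σ t x u v i j)^2) := by rw [← normsq_eq]
        _ ≤ r^2 * (C₀*(1+r))^2 := mul_le_mul_of_nonneg_left htrS hs0
    have hip : ⟪x, b t x u v⟫ ≤ r * (C₀*(1+r)) := by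
      calc ⟪x, b t x u v⟫ ≤ ‖x‖ * ‖b t x u v‖ := real_inner_le_norm x _
        _ ≤ r * (C₀*(1+r)) := mul_le_mul_of_nonneg_left hbB hr0
    set rq : ℝ := ‖rowMul x (σ t x u v)‖ with hrqdef
    have hrq0 : 0 ≤ rq := norm_nonneg _
    have hrqsq : rq^2 = Q := norm_rowMul_sq x (σ t x u v)
    have hrq : rq ≤ r * (C₀*(1+r)) := by
      have hrb : 0 ≤ r * (C₀*(1+r)) :=
        mul_nonneg hr0 (by positivity)
      nlinarith
    -- rewrite all terms
    have htrace : Matrix.trace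
        (σ t x u v * (σ t x u v)ᵀ * spaceHess (chiFun T (M+1) A) t x)
        = 4 * h2 * Q + 2 * h1 * trS := by
      rw [hhess]
      exact trace_formula (σ t x u v) x (4 * h2) (2 * h1)
    have hinner : ⟪spaceGrad (chiFun T (M+1) A) t x, b t x u v⟫
        = 2 * h1 * ⟪x, b t x u v⟫ := by
      rw [hgrad, real_inner_smul_left]
    have hrow : ‖rowMul (spaceGrad (chiFun T (M+1) A) t x) (σ t x u v)‖
        = 2 * h1 * rq := by
      rw [hgrad, rowMul_smul, norm_smul, Real.norm_eq_abs,
        abs_of_nonneg (by linarith : (0:ℝ) ≤ 2 * h1)]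
    rw [htrace, hinner, hrow, hchix]
    have hterm := term_bound A C₀ K r Q trS (⟪x, b t x u v⟫) rq (r^2) L E h1 h2
      hA hC₀ hK hr0 rfl hLge hEpos h1n
      (h1def ▸ H1_mul_D hc2 hs0) (h2def ▸ H2_abs_mul hA hc1 hc2 hs0)
      hQ0 hQ htrS0 htrS hip hrq0 hrq
    calc (1 / 2) * (4 * h2 * Q + 2 * h1 * trS) + 2 * h1 * ⟪x, b t x u v⟫
          + K * E + K * (2 * h1 * rq)
        = 2*h2*Q + h1*trS + 2*h1*⟪x, b t x u v⟫ + K*E + K*(2*h1*rq) := by ring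
      _ ≤ (8*A*(2*A+1)*C₀^2 + 4*A*C₀^2 + 6*A*C₀*(1+K) + K) * (L^2*E) := hterm
      _ = M * (L^2 * E) := by rw [hM]
  have hsup : (⨆ u : U, ⨆ v : V,
      (1 / 2) * Matrix.trace
          (σ t x u v * (σ t x u v)ᵀ * spaceHess (chiFun T (M+1) A) t x)
        + ⟪spaceGrad (chiFun T (M+1) A) t x, b t x u v⟫
        + K * chiFun T (M+1) A t x
        + K * ‖rowMul (spaceGrad (chiFun T (M+1) A) t x) (σ t x u v)‖)
      ≤ M * (L^2 * E) :=
    ciSup_le fun u => ciSup_le fun v => key u v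
  have hLpos : 0 < L := lt_of_lt_of_le one_pos hLge
  have hLE : 0 < L^2 * E := mul_pos (pow_pos hLpos 2) hEpos
  rw [hchix] at hsup
  rw [htd, hpsix, hchix]
  linarith
end
end

section
/- Let U and V be compact metric spaces, let g : U×V → ℝ be continuous, and let θ > 0 be such that sup_{u∈U} inf_{v∈V} g(u,v) ≤ −θ. Then there exists a Borel-measurable map ψ : U → V such that g(u, ψ(u)) ≤ −(3/4)θ for every u ∈ U. -/
open Set

lemma exists_measurable_piecewise_aux {U V : Type*} [MeasurableSpace U] [MeasurableSpace V]
    [Nonempty V] (P : U → V → Prop) :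
    ∀ l : List (Set U × V), (∀ p ∈ l, MeasurableSet p.1) →
      (∀ p ∈ l, ∀ u ∈ p.1, P u p.2) →
      ∃ ψ : U → V, Measurable ψ ∧ ∀ u, u ∈ (⋃ p ∈ l, p.1) → P u (ψ u) := by
  classical
  intro l
  induction l with
  | nil =>
    intro _ _
    exact ⟨fun _ => Classical.arbitrary V, measurable_const, by simp⟩
  | cons p l ih =>
    intro hm hP
    obtain ⟨ψ, hψm, hψ⟩ := ih (fun q hq => hm q (List.mem_cons_of_mem _ hq))
      (fun q hq => hP q (List.mem_cons_of_mem _ hq))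
    refine ⟨p.1.piecewise (fun _ => p.2) ψ,
      Measurable.piecewise (hm p (List.mem_cons_self)) measurable_const hψm, ?_⟩
    intro u hu
    by_cases h : u ∈ p.1
    · rw [Set.piecewise_eq_of_mem _ _ _ h]
      exact hP p (List.mem_cons_self) u h
    · rw [Set.piecewise_eq_of_notMem _ _ _ h]
      apply hψ
      simp only [List.mem_cons, Set.mem_iUnion] at hu ⊢
      obtain ⟨q, hq | hq, hqu⟩ := hu
      · exact absurd (hq ▸ hqu) h
      · exact ⟨q, hq, hqu⟩

/-- **Measurable selection of an almost-minimizing control.** If `g : U × V → ℝ` is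
continuous on compact metric spaces `U`, `V` and `sup_{u∈U} inf_{v∈V} g(u,v) ≤ −θ` for some
`θ > 0`, then there is a Borel-measurable `ψ : U → V` with `g(u, ψ(u)) ≤ −(3/4)θ` for
every `u ∈ U`. -/
theorem measurable_almost_minimizing_selector
    {U V : Type*} [MetricSpace U] [CompactSpace U] [Nonempty U]
    [MeasurableSpace U] [BorelSpace U]
    [MetricSpace V] [CompactSpace V] [Nonempty V]
    [MeasurableSpace V] [BorelSpace V]
    (g : U → V → ℝ) (hg : Continuous fun p : U × V => g p.1 p.2)
    (θ : ℝ) (hθ : 0 < θ)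
    (hsup : (⨆ u : U, ⨅ v : V, g u v) ≤ -θ) :
    ∃ ψ : U → V, Measurable ψ ∧ ∀ u : U, g u (ψ u) ≤ -(3 / 4) * θ := by
  classical
  -- global bounds for g
  obtain ⟨p₀, -, hp₀⟩ := isCompact_univ.exists_isMinOn (Set.univ_nonempty)
    hg.continuousOn
  obtain ⟨p₁, -, hp₁⟩ := isCompact_univ.exists_isMaxOn (Set.univ_nonempty)
    hg.continuousOn
  have hbelow : ∀ u, BddBelow (Set.range (g u)) := by
    intro u
    exact ⟨g p₀.1 p₀.2, by rintro x ⟨v, rfl⟩; exact hp₀ (Set.mem_univ (u, v))⟩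
  have hbddAbove : BddAbove (Set.range fun u => ⨅ v : V, g u v) := by
    refine ⟨g p₁.1 p₁.2, ?_⟩
    rintro x ⟨u, rfl⟩
    exact ciInf_le_of_le (hbelow u) (Classical.arbitrary V) (hp₁ (Set.mem_univ (u, Classical.arbitrary V)))
  have hinf : ∀ u : U, (⨅ v : V, g u v) ≤ -θ :=
    fun u => le_trans (le_ciSup hbddAbove u) hsup
  -- choose near-minimizers
  have h1 : ∀ u : U, ∃ v : V, g u v ≤ -θ := by
    intro u
    have hc : Continuous fun v : V => g u v := hg.comp (Continuous.prodMk_right u)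
    obtain ⟨v, -, hv⟩ := isCompact_univ.exists_isMinOn (Set.univ_nonempty) hc.continuousOn
    refine ⟨v, le_trans ?_ (hinf u)⟩
    exact le_ciInf fun v' => hv (Set.mem_univ v')
  choose w hw using h1
  set O : U → Set U := fun u => (fun u' => g u' (w u)) ⁻¹' Set.Iio (-(3 / 4) * θ) with hO
  have hOopen : ∀ u, IsOpen (O u) :=
    fun u => (isOpen_Iio).preimage (hg.comp (continuous_id.prodMk continuous_const))
  have hmemO : ∀ u, u ∈ O u := by
    intro u
    have := hw u
    simp only [O, Set.mem_preimage, Set.mem_Iio]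
    linarith
  have hcov : (Set.univ : Set U) ⊆ ⋃ u, O u := fun u _ => Set.mem_iUnion.2 ⟨u, hmemO u⟩
  obtain ⟨t, ht⟩ := isCompact_univ.elim_finite_subcover O hOopen hcov
  set l : List (Set U × V) := t.toList.map fun u => (O u, w u) with hl
  obtain ⟨ψ, hψm, hψ⟩ := exists_measurable_piecewise_aux
    (fun u' v' => g u' v' ≤ -(3 / 4) * θ) l
    (by
      rintro p hp
      simp only [l, List.mem_map] at hp
      obtain ⟨u, -, rfl⟩ := hp
      exact (hOopen u).measurableSet)
    (by
      rintro p hp u' hu'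
      simp only [l, List.mem_map] at hp
      obtain ⟨u, -, rfl⟩ := hp
      exact le_of_lt hu')
  refine ⟨ψ, hψm, fun u => ?_⟩
  apply hψ
  have := ht (Set.mem_univ u)
  simp only [Set.mem_iUnion] at this ⊢
  obtain ⟨x, hx, hux⟩ := this
  exact ⟨(O x, w x), List.mem_map.2 ⟨x, Finset.mem_toList.2 hx, rfl⟩, hux⟩
end
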